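/- Let G be a bipartite graph and let I be a maximum independent set in G with an accessibility ordering σ. Then the matching M^σ is a uniquely restricted maximum matching in G; in particular G contains no M^σ-alternating cycle. -/

import Mathlib

variable {V : Type*}

/-- `M` is a matching in `G`: a set of edges of `G` that are pairwise disjoint. -/
def IsMatchingSet (G : SimpleGraph V) (M : Set (Sym2 V)) : Prop :=
  M ⊆ G.edgeSet ∧ ∀ e ∈ M, ∀ f ∈ M, e ≠ f → ∀ v : V, v ∈ e → v ∉ f

/-- `V(M)`: the set of vertices covered by the matching `M`. -/
def matVerts (M : Set (Sym2 V)) : Set V := {v | ∃ e ∈ M, v ∈ e}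

/-- `M` is a maximum matching in `G`. -/
def IsMaximumMatching (G : SimpleGraph V) (M : Set (Sym2 V)) : Prop :=
  IsMatchingSet G M ∧ ∀ M', IsMatchingSet G M' → M'.ncard ≤ M.ncard

/-- `M` is uniquely restricted: no matching distinct from `M` covers the same vertices. -/
def UniquelyRestricted (G : SimpleGraph V) (M : Set (Sym2 V)) : Prop :=
  ∀ M', IsMatchingSet G M' → matVerts M' = matVerts M → M' = M

/-- `M` is a perfect matching of `G`. -/
def IsPerfectMatchingSet (G : SimpleGraph V) (M : Set (Sym2 V)) : Prop :=
  IsMatchingSet G M ∧ matVerts M = Set.univ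

/-- `A, B` form a bipartition of `G`. -/
def IsBipartition (G : SimpleGraph V) (A B : Set V) : Prop :=
  Disjoint A B ∧ A ∪ B = Set.univ ∧
    ∀ ⦃u v : V⦄, G.Adj u v → (u ∈ A ∧ v ∈ B) ∨ (u ∈ B ∧ v ∈ A)

/-- `I` is an independent set in `G`. -/
def IsIndepSet (G : SimpleGraph V) (I : Set V) : Prop :=
  ∀ u ∈ I, ∀ v ∈ I, ¬ G.Adj u v

/-- `I` is a maximum independent set in `G`. -/
def IsMaximumIndepSet (G : SimpleGraph V) (I : Set V) : Prop :=
  IsIndepSet G I ∧ ∀ J, IsIndepSet G J → J.ncard ≤ I.ncard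

/-- The arcs of the digraph `D(M)`: edges not in `M` oriented from `A` to `B`,
edges of `M` oriented from `B` to `A`. -/
def DMarc (G : SimpleGraph V) (A B : Set V) (M : Set (Sym2 V)) (u v : V) : Prop :=
  G.Adj u v ∧ ((u ∈ A ∧ v ∈ B ∧ s(u, v) ∉ M) ∨ (u ∈ B ∧ v ∈ A ∧ s(u, v) ∈ M))

/-- The digraph `D(M)` is acyclic. -/
def DMAcyclic (G : SimpleGraph V) (A B : Set V) (M : Set (Sym2 V)) : Prop :=
  ∀ v : V, ¬ Relation.TransGen (DMarc G A B M) v v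

/-- `V⁺(M)`: vertices reachable in `D(M)` from an `A`-vertex uncovered by `M`. -/
def Vplus (G : SimpleGraph V) (A B : Set V) (M : Set (Sym2 V)) : Set V :=
  {v | ∃ a ∈ A, a ∉ matVerts M ∧ Relation.ReflTransGen (DMarc G A B M) a v}

/-- `V⁻(M)`: vertices from which a `B`-vertex uncovered by `M` is reachable in `D(M)`. -/
def Vminus (G : SimpleGraph V) (A B : Set V) (M : Set (Sym2 V)) : Set V :=
  {v | ∃ b ∈ B, b ∉ matVerts M ∧ Relation.ReflTransGen (DMarc G A B M) v b}

/-- Given a linear ordering `l` of an independent set, `Mσ G l` is the set of edges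
`y·p(y)` where `p(y)` is the first vertex of `l` adjacent to `y`. -/
def Msigma (G : SimpleGraph V) (l : List V) : Set (Sym2 V) :=
  {e | ∃ (i : Fin l.length) (y : V), e = s(y, l.get i) ∧ G.Adj (l.get i) y ∧
      ∀ j : Fin l.length, (j : ℕ) < (i : ℕ) → ¬ G.Adj (l.get j) y}

/-- `l` is an accessibility ordering of `I`: it enumerates `I` without repetition
and `Mσ` is a matching. -/
def IsAccessibilityOrdering (G : SimpleGraph V) (I : Set V) (l : List V) : Prop :=
  l.Nodup ∧ {v | v ∈ l} = I ∧ IsMatchingSet G (Msigma G l)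

/-- A partial accessibility ordering: an accessibility ordering of a subset of `I`. -/
def IsPartialAccessibilityOrdering (G : SimpleGraph V) (I : Set V) (l : List V) : Prop :=
  l.Nodup ∧ {v | v ∈ l} ⊆ I ∧ IsMatchingSet G (Msigma G l)

/-- `c` is an `M`-alternating cycle: of every two adjacent edges exactly one is in `M`. -/
def IsAlternatingCycle (G : SimpleGraph V) (M : Set (Sym2 V)) {v : V} (c : G.Walk v v) : Prop :=
  c.IsCycle ∧ (c.edges ++ c.edges.take 1).Chain' (fun e f => e ∈ M ↔ f ∉ M)

/-- `M'` arises from `M` by a single edge exchange. -/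
def EdgeExchange (G : SimpleGraph V) (A B : Set V) (M M' : Set (Sym2 V)) : Prop :=
  (∃ a a' b' : V, a ∈ A ∧ a ∉ matVerts M ∧ s(a', b') ∈ M ∧ G.Adj a b' ∧
      M' = (M \ {s(a', b')}) ∪ {s(a, b')}) ∨
  (∃ b a' b' : V, b ∈ B ∧ b ∉ matVerts M ∧ s(a', b') ∈ M ∧ G.Adj a' b ∧
      M' = (M \ {s(a', b')}) ∪ {s(a', b)})

/-! Every vertex outside the maximum independent set `I` has a neighbour in `I`, so `Mσ` covers
`V ∖ I` by edges with only one end outside `I`; as every edge has an end outside `I`, no matching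
is larger. Both the unique restrictedness and the absence of alternating cycles reduce to: no
nonempty edge set `F` alternates with `Mσ`, i.e. has at each of its vertices an edge in `Mσ` and
one outside `Mσ`. Indeed, take the vertex `σᵢ` of `F` of least index and the edge `σᵢ z ∈ F ∖ Mσ`.
The `Mσ`-edge of `F` at `z ∉ I` is `z p(z)`; the index of `p(z)` is at most `i` by the choice of
`p` and at least `i` by minimality, so `z p(z) = z σᵢ`, which is not in `Mσ`. -/

open scoped symmDiff

def IsAlternatingEdgeSet (M F : Set (Sym2 V)) : Prop :=
  ∀ v ∈ matVerts F, v ∈ matVerts (F ∩ M) ∧ v ∈ matVerts (F \ M)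

lemma matVerts_mono {M N : Set (Sym2 V)} (h : M ⊆ N) : matVerts M ⊆ matVerts N :=
  fun _ ⟨e, he, hve⟩ => ⟨e, h he, hve⟩

variable {G : SimpleGraph V}

lemma SimpleGraph.exists_eq_mk_adj_of_mem_edgeSet {e : Sym2 V} {u : V} (he : e ∈ G.edgeSet)
    (hu : u ∈ e) : ∃ z, e = s(u, z) ∧ G.Adj u z := by
  obtain ⟨z, rfl⟩ := Sym2.mem_iff_exists.mp hu
  exact ⟨z, rfl, he⟩

lemma SimpleGraph.Walk.rel_of_isChain_edges_append {R : Sym2 V → Sym2 V → Prop} {u v w : V}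
    (p : G.Walk u v) (q : G.Walk v w) (hp : ¬ p.Nil) (hq : ¬ q.Nil)
    (h : (p.edges ++ q.edges.take 1).IsChain R) : R s(p.penultimate, v) s(v, q.snd) := by
  refine (List.isChain_append.mp h).2.2 _ ?_ _ ?_
  · simp [List.getLast?_eq_some_getLast (edges_eq_nil.not.mpr hp)]
  · rw [List.head?_take, if_neg one_ne_zero, List.head?_eq_some_head (edges_eq_nil.not.mpr hq)]
    simp

lemma SimpleGraph.Walk.exists_rel_of_isChain_edges {R : Sym2 V → Sym2 V → Prop} {u v : V}
    {c : G.Walk v v} (hc : ¬ c.Nil) (h : (c.edges ++ c.edges.take 1).IsChain R)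
    (hu : u ∈ c.support) : ∃ e ∈ c.edges, ∃ f ∈ c.edges, u ∈ e ∧ u ∈ f ∧ R e f := by
  classical
  by_cases huv : u = v
  · subst huv
    exact ⟨_, mk_penultimate_end_mem_edges hc, _, mk_start_snd_mem_edges hc,
      Sym2.mem_mk_right _ _, Sym2.mem_mk_left _ _, rel_of_isChain_edges_append c c hc hc h⟩
  have hp : ¬ (c.takeUntil u hu).Nil := not_nil_of_ne (Ne.symm huv)
  have hq : ¬ (c.dropUntil u hu).Nil := not_nil_of_ne huv
  have hsplit : c.edges = (c.takeUntil u hu).edges ++ (c.dropUntil u hu).edges := by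
    rw [← edges_append, c.take_spec hu]
  rw [hsplit, List.append_assoc] at h
  refine ⟨_, c.edges_takeUntil_subset_edges hu (mk_penultimate_end_mem_edges hp),
    _, c.edges_dropUntil_subset_edges hu (mk_start_snd_mem_edges hq),
    Sym2.mem_mk_right _ _, Sym2.mem_mk_left _ _, rel_of_isChain_edges_append _ _ hp hq ?_⟩
  exact h.prefix ((List.prefix_append_right_inj _).mpr
    ((List.take_prefix _ _).trans (List.prefix_append _ _)))

lemma IsAlternatingCycle.isAlternatingEdgeSet {M : Set (Sym2 V)} {v : V} {c : G.Walk v v}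
    (hc : IsAlternatingCycle G M c) : IsAlternatingEdgeSet M {e | e ∈ c.edges} := by
  rintro u ⟨e, he, hue⟩
  obtain ⟨w, rfl⟩ := Sym2.mem_iff_exists.mp hue
  obtain ⟨e, he, f, hf, hue, huf, hef⟩ :=
    c.exists_rel_of_isChain_edges hc.1.not_nil hc.2 (c.fst_mem_support_of_mem_edges he)
  by_cases heM : e ∈ M
  · exact ⟨⟨e, ⟨he, heM⟩, hue⟩, ⟨f, ⟨hf, hef.mp heM⟩, huf⟩⟩
  · exact ⟨⟨f, ⟨hf, not_not.mp (mt hef.mpr heM)⟩, huf⟩, ⟨e, ⟨he, heM⟩, hue⟩⟩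

lemma IsMatchingSet.mem_matVerts_sdiff {M M' : Set (Sym2 V)} (hM : IsMatchingSet G M)
    (hV : matVerts M ⊆ matVerts M') {e : Sym2 V} (he : e ∈ M \ M') {v : V} (hv : v ∈ e) :
    v ∈ matVerts (M' \ M) := by
  obtain ⟨f, hf, hvf⟩ := hV ⟨e, he.1, hv⟩
  refine ⟨f, ⟨hf, fun hfM => hM.2 e he.1 f hfM ?_ v hv hvf⟩, hvf⟩
  rintro rfl
  exact he.2 hf

lemma IsMatchingSet.isAlternatingEdgeSet_symmDiff {M M' : Set (Sym2 V)} (hM : IsMatchingSet G M)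
    (hM' : IsMatchingSet G M') (hV : matVerts M = matVerts M') :
    IsAlternatingEdgeSet M (M ∆ M') := by
  have hin : M \ M' ⊆ (M ∆ M') ∩ M := fun e he => ⟨Or.inl he, he.1⟩
  have hout : M' \ M ⊆ (M ∆ M') \ M := fun e he => ⟨Or.inr he, he.2⟩
  rintro v ⟨e, he | he, hve⟩
  · exact ⟨matVerts_mono hin ⟨e, he, hve⟩, matVerts_mono hout (hM.mem_matVerts_sdiff hV.le he hve)⟩
  · exact ⟨matVerts_mono hin (hM'.mem_matVerts_sdiff hV.ge he hve), matVerts_mono hout ⟨e, he, hve⟩⟩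

lemma IsIndepSet.exists_mem_notMem {I : Set V} (hI : IsIndepSet G I) {e : Sym2 V}
    (he : e ∈ G.edgeSet) : ∃ u ∈ e, u ∉ I := by
  induction e using Sym2.ind with
  | _ a b =>
    by_cases ha : a ∈ I
    · exact ⟨b, Sym2.mem_mk_right a b, fun hb => hI a ha b hb he⟩
    · exact ⟨a, Sym2.mem_mk_left a b, ha⟩

lemma IsIndepSet.ncard_le_of_compl_subset_matVerts [Finite V] {I : Set V} {M M' : Set (Sym2 V)}
    (hI : IsIndepSet G I) (hMI : ∀ e ∈ M, ∃ x ∈ I, x ∈ e) (hcov : Iᶜ ⊆ matVerts M)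
    (hM' : IsMatchingSet G M') : M'.ncard ≤ M.ncard := by
  have h : ∀ e : M', ∃ f : M, ∃ u ∉ I, u ∈ (e : Sym2 V) ∧ u ∈ (f : Sym2 V) := by
    rintro ⟨e, he⟩
    obtain ⟨u, hue, huI⟩ := hI.exists_mem_notMem (hM'.1 he)
    obtain ⟨f, hf, huf⟩ := hcov huI
    exact ⟨⟨f, hf⟩, u, huI, hue, huf⟩
  choose φ u huI hue huf using h
  rw [← Nat.card_coe_set_eq, ← Nat.card_coe_set_eq]
  refine Nat.card_le_card_of_injective φ fun e₁ e₂ hφ => ?_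
  -- `φ e` has one end in `I`, so `u e` is its other end
  have hu : u e₁ = u e₂ := by
    obtain ⟨x, hxI, hx⟩ := hMI _ (φ e₂).2
    obtain ⟨w, hw⟩ := Sym2.mem_iff_exists.mp hx
    have other_end : ∀ e, φ e = φ e₂ → u e = w := fun e he => by
      have := huf e
      rw [he, hw, Sym2.mem_iff] at this
      exact this.resolve_left fun h => huI e (h ▸ hxI)
    exact (other_end e₁ hφ).trans (other_end e₂ rfl).symm
  by_contra hne
  exact hM'.2 _ e₁.2 _ e₂.2 (Subtype.coe_injective.ne hne) _ (hue e₁) (hu ▸ hue e₂)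

lemma IsMaximumIndepSet.exists_adj_of_notMem [Finite V] {I : Set V} (hI : IsMaximumIndepSet G I)
    {u : V} (hu : u ∉ I) : ∃ v ∈ I, G.Adj v u := by
  by_contra! h
  have hins : IsIndepSet G (insert u I) := by
    rintro a (rfl | ha) b (rfl | hb) hab
    · exact G.loopless.irrefl _ hab
    · exact h b hb hab.symm
    · exact h a ha hab
    · exact hI.1 a ha b hb hab
  have := hI.2 _ hins
  rw [Set.ncard_insert_of_notMem hu] at this
  omega

lemma exists_mk_mem_Msigma {l : List V} {j : Fin l.length} {y : V} (h : G.Adj (l.get j) y) :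
    ∃ i, s(y, l.get i) ∈ Msigma G l := by
  obtain ⟨i, hi, hmin⟩ :=
    WellFounded.has_min wellFounded_lt {k : Fin l.length | G.Adj (l.get k) y} ⟨j, h⟩
  exact ⟨i, i, y, rfl, hi, fun k hk hadj => hmin k hadj hk⟩

lemma compl_subset_matVerts_Msigma [Finite V] {I : Set V} {l : List V}
    (hI : IsMaximumIndepSet G I) (hl : {v | v ∈ l} = I) : Iᶜ ⊆ matVerts (Msigma G l) := by
  intro u hu
  obtain ⟨v, hv, hadj⟩ := hI.exists_adj_of_notMem hu
  rw [← hl] at hv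
  obtain ⟨j, rfl⟩ := List.get_of_mem hv
  obtain ⟨i, hi⟩ := exists_mk_mem_Msigma hadj
  exact ⟨_, hi, Sym2.mem_mk_left _ _⟩

lemma eq_empty_of_isAlternatingEdgeSet_Msigma {l : List V} {F : Set (Sym2 V)}
    (hl : IsIndepSet G {v | v ∈ l}) (hF : F ⊆ G.edgeSet)
    (halt : IsAlternatingEdgeSet (Msigma G l) F) : F = ∅ := by
  by_contra hne
  obtain ⟨e, he⟩ := Set.nonempty_iff_ne_empty.mpr hne
  have hS : {k : Fin l.length | l.get k ∈ matVerts F}.Nonempty := by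
    obtain ⟨_, ⟨hgF, k, y, rfl, -⟩, -⟩ := (halt _ ⟨e, he, e.out_fst_mem⟩).1
    exact ⟨k, _, hgF, Sym2.mem_mk_right _ _⟩
  obtain ⟨i, hiF, hmin⟩ := WellFounded.has_min wellFounded_lt _ hS
  obtain ⟨f, ⟨hfF, hfM⟩, hif⟩ := (halt _ hiF).2
  obtain ⟨z, rfl, hiz⟩ := SimpleGraph.exists_eq_mk_adj_of_mem_edgeSet (hF hfF) hif
  obtain ⟨_, ⟨hgF, k, y, rfl, hky, hkmin⟩, hzg⟩ := (halt z ⟨_, hfF, Sym2.mem_mk_right _ _⟩).1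
  obtain rfl : z = y := (Sym2.mem_iff.mp hzg).resolve_right fun hzk =>
    hl _ (List.get_mem l i) _ (hzk ▸ List.get_mem l k) hiz
  obtain rfl : i = k := le_antisymm (not_lt.mp (hmin k ⟨_, hgF, Sym2.mem_mk_right _ _⟩))
    (not_lt.mp fun h => hkmin i h hiz)
  exact hfM (Sym2.eq_swap ▸ ⟨i, z, rfl, hky, hkmin⟩)

theorem stmt3_general [Fintype V] (G : SimpleGraph V)
    (I : Set V) (hI : IsMaximumIndepSet G I)
    (l : List V) (hl : IsAccessibilityOrdering G I l) :
    IsMaximumMatching G (Msigma G l) ∧ UniquelyRestricted G (Msigma G l) ∧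
      ¬ ∃ (v : V) (c : G.Walk v v), IsAlternatingCycle G (Msigma G l) c := by
  obtain ⟨-, hlI, hM⟩ := hl
  have hind : IsIndepSet G {v | v ∈ l} := hlI ▸ hI.1
  have hMI : ∀ e ∈ Msigma G l, ∃ x ∈ I, x ∈ e := by
    rintro _ ⟨i, y, rfl, -, -⟩
    exact ⟨l.get i, hlI ▸ List.get_mem l i, Sym2.mem_mk_right _ _⟩
  refine ⟨⟨hM, fun M' hM' => hI.1.ncard_le_of_compl_subset_matVerts hMI
    (compl_subset_matVerts_Msigma hI hlI) hM'⟩, fun M' hM' hV => ?_, ?_⟩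
  · have hF : Msigma G l ∆ M' ⊆ G.edgeSet :=
      Set.symmDiff_subset_union.trans (Set.union_subset hM.1 hM'.1)
    exact (symmDiff_eq_bot.mp (eq_empty_of_isAlternatingEdgeSet_Msigma hind hF
      (hM.isAlternatingEdgeSet_symmDiff hM' hV.symm))).symm
  · rintro ⟨v, c, hc⟩
    have hF : {e | e ∈ c.edges} ⊆ G.edgeSet := c.edges_subset_edgeSet
    exact Set.eq_empty_iff_forall_notMem.mp
      (eq_empty_of_isAlternatingEdgeSet_Msigma hind hF hc.isAlternatingEdgeSet) _
      (c.mk_start_snd_mem_edges hc.1.not_nil)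

/-- `Mσ` is a uniquely restricted maximum matching; in particular there is no
`Mσ`-alternating cycle. -/
theorem stmt3 [Fintype V] (G : SimpleGraph V) (A B : Set V) (hbip : IsBipartition G A B)
    (I : Set V) (hI : IsMaximumIndepSet G I)
    (l : List V) (hl : IsAccessibilityOrdering G I l) :
    IsMaximumMatching G (Msigma G l) ∧ UniquelyRestricted G (Msigma G l) ∧
      ¬ ∃ (v : V) (c : G.Walk v v), IsAlternatingCycle G (Msigma G l) c :=
  stmt3_general G I hI l hl
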